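/- The Clebsch graph has odd girth 5 and admits an orientation in which every cycle of length 5 is alternating. -/

import Mathlib

universe u

/-- An orientation of a simple graph: each edge receives exactly one of its two directions. -/
structure GraphOrientation {V : Type u} (G : SimpleGraph V) where
  dir : V → V → Prop
  adj_iff : ∀ u v, G.Adj u v ↔ (dir u v ∨ dir v u)
  asymm : ∀ u v, dir u v → ¬ dir v u

/-- The closed out-neighborhood of a vertex in an orientation. -/
def GraphOrientation.closedOutNbhd {V : Type u} {G : SimpleGraph V}
    (D : GraphOrientation G) (v : V) : Set V :=
  insert v {u | D.dir v u}

/-- The directed local chromatic number of an oriented graph: the least `n` such that some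
proper coloring of the underlying graph puts at most `n` colors on every closed
out-neighborhood. -/
noncomputable def psiD {V : Type u} {G : SimpleGraph V} (D : GraphOrientation G) : ℕ∞ :=
  sInf {n : ℕ∞ | ∃ c : V → ℕ, (∀ u w, G.Adj u w → c u ≠ c w) ∧
    ∀ v, (c '' D.closedOutNbhd v).encard ≤ n}

/-- `ψ_{d,min}`: the minimum of `ψ_d` over all orientations of `G`. -/
noncomputable def psiDMin {V : Type u} (G : SimpleGraph V) : ℕ∞ :=
  ⨅ D : GraphOrientation G, psiD D

/-- `f : ZMod n → V` describes a cycle of length `n` in `G`. -/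
def SimpleGraph.IsCycleMap {V : Type u} (G : SimpleGraph V) {n : ℕ} (f : ZMod n → V) : Prop :=
  Function.Injective f ∧ ∀ i, G.Adj (f i) (f (i + 1))

/-- The cycle described by `f` is alternating with respect to the direction relation `D`:
exactly one of its vertices is neither a source nor a sink of the cycle. -/
def IsAltCycle {V : Type u} (D : V → V → Prop) {n : ℕ} (f : ZMod n → V) : Prop :=
  ∃! i : ZMod n,
    ¬ ((D (f i) (f (i - 1)) ∧ D (f i) (f (i + 1))) ∨
       (D (f (i - 1)) (f i) ∧ D (f (i + 1)) (f i)))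

/-- The orientation `D` of `G` contains an alternating odd cycle. -/
def HasAltOddCycle {V : Type u} {G : SimpleGraph V} (D : GraphOrientation G) : Prop :=
  ∃ (n : ℕ) (f : ZMod n → V), Odd n ∧ G.IsCycleMap f ∧ IsAltCycle D.dir f

/-- The odd girth of `G`: the length of a shortest odd cycle. -/
noncomputable def oddGirth {V : Type u} (G : SimpleGraph V) : ℕ :=
  sInf {n | Odd n ∧ ∃ f : ZMod n → V, G.IsCycleMap f}

/-- The symmetric shift graph `S_m`. -/
def shiftGraph (m : ℕ) : SimpleGraph {p : Fin m × Fin m // p.1 ≠ p.2} where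
  Adj x y := x.1.2 = y.1.1 ∨ x.1.1 = y.1.2
  symm := ⟨fun _ _ h => h.elim (fun h => Or.inr h.symm) (fun h => Or.inl h.symm)⟩
  loopless := ⟨fun x h => h.elim (fun h => x.2 h.symm) (fun h => x.2 h)⟩

/-- The Kneser graph `KG(n,k)`. -/
def kneserGraph (n k : ℕ) : SimpleGraph {A : Finset (Fin n) // A.card = k} where
  Adj A B := Disjoint A.1 B.1 ∧ A ≠ B
  symm := ⟨fun _ _ h => ⟨h.1.symm, h.2.symm⟩⟩
  loopless := ⟨fun _ h => h.2 rfl⟩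

/-- A subset of `Fin n` (thought of as `[n]` arranged cyclically) is stable if it contains
no two cyclically consecutive elements. -/
def IsStableSet {n : ℕ} (A : Finset (Fin n)) : Prop :=
  ∀ i ∈ A, ∀ j ∈ A, (i.val + 1) % n ≠ j.val

/-- The Schrijver graph `SG(n,k)`. -/
def schrijverGraph (n k : ℕ) :
    SimpleGraph {A : Finset (Fin n) // A.card = k ∧ IsStableSet A} where
  Adj A B := Disjoint A.1 B.1 ∧ A ≠ B
  symm := ⟨fun _ _ h => ⟨h.1.symm, h.2.symm⟩⟩
  loopless := ⟨fun _ h => h.2 rfl⟩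

/-- The `r`-level generalized Mycielskian `M_r(G)`; `none` is the apex vertex `z`. -/
def genMycielskian {V : Type u} (G : SimpleGraph V) (r : ℕ) :
    SimpleGraph (Option (V × Fin r)) where
  Adj x y :=
    match x, y with
    | some (u, i), some (v, j) =>
        G.Adj u v ∧ (i.val + 1 = j.val ∨ j.val + 1 = i.val ∨ (i.val = 0 ∧ j.val = 0))
    | some (_, i), none => i.val = r - 1
    | none, some (_, j) => j.val = r - 1
    | none, none => False
  symm := by
    constructor
    rintro (_ | ⟨u, i⟩) (_ | ⟨v, j⟩) h
    · exact h
    · exact h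
    · exact h
    · exact ⟨h.1.symm, by tauto⟩
  loopless := by
    constructor
    rintro (_ | ⟨u, i⟩) h
    · exact h
    · exact G.loopless.irrefl u h.1

/-- The Clebsch graph (folded 5-cube): vertices `F₂⁴`, adjacency iff Hamming distance 1 or 4. -/
def clebsch : SimpleGraph (Fin 4 → ZMod 2) where
  Adj x y := hammingDist x y = 1 ∨ hammingDist x y = 4
  symm := by constructor; intro x y h; rwa [hammingDist_comm]
  loopless := by constructor; intro x h; simp [hammingDist_self] at h


/-!
Write `e₀, …, e₃` for the unit vectors of `(ZMod 2)^4` and `𝟙` for the all-ones vector. The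
Clebsch graph is the Cayley graph with connection set `{e₀, e₁, e₂, e₃, 𝟙}`, any three of
whose elements are linearly independent, so it is triangle-free; the walk
`0, e₀, e₀ + e₁, e₀ + e₁ + e₂, 𝟙` closes up to a pentagon, so the odd girth is `5`.

Orient every edge downwards along the proper colouring `x ↦ 2 (x₁ + x₂ + x₃) + x₀` with
colours `0, …, 3`. A directed path with three edges runs through the colours `3, 2, 1, 0`,
which forces its steps to be `e₀, 𝟙, e₀`; hence its ends differ by `𝟙` and are adjacent. On a
pentagon of a triangle-free graph, three consecutive edges pointing the same way would thus
produce a triangle, and a cyclic binary word of length five without three equal consecutive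
letters has exactly one pair of equal consecutive letters: the pentagon is alternating.
-/

theorem ZMod.existsUnique_eq_prev_of_forall_not_three_eq (b : ZMod 5 → Bool)
    (h : ∀ i, ¬ (b i = b (i + 1) ∧ b (i + 1) = b (i + 2))) : ∃! i, b (i - 1) = b i := by
  revert b
  simp only [Fintype.existsUnique_iff_card_one]
  decide

namespace GraphOrientation

variable {V : Type u} {G : SimpleGraph V}

def ofColoring {α : Type*} [LinearOrder α] (C : G.Coloring α) : GraphOrientation G where
  dir u v := G.Adj u v ∧ C v < C u
  adj_iff _ _ := ⟨fun h => (C.valid h).lt_or_gt.symm.imp (⟨h, ·⟩) (⟨h.symm, ·⟩),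
    fun h => h.elim And.left fun h => h.1.symm⟩
  asymm _ _ h h' := lt_asymm h.2 h'.2

def ClosesThreePaths (D : GraphOrientation G) : Prop :=
  ∀ a b c d, D.dir a b → D.dir b c → D.dir c d → G.Adj a d

section

variable (D : GraphOrientation G)

theorem dir_iff_not_dir {u v : V} (h : G.Adj u v) : D.dir u v ↔ ¬ D.dir v u :=
  ⟨D.asymm u v, ((D.adj_iff u v).1 h).resolve_right⟩

theorem not_source_or_sink_iff {a b c : V} (hab : G.Adj a b) (hbc : G.Adj b c) :
    ¬ ((D.dir b a ∧ D.dir b c) ∨ (D.dir a b ∧ D.dir c b)) ↔ (D.dir a b ↔ D.dir b c) := by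
  rw [D.dir_iff_not_dir hab.symm, D.dir_iff_not_dir hbc.symm]
  tauto

theorem isAltCycle_iff {n : ℕ} {f : ZMod n → V} (hf : G.IsCycleMap f) :
    IsAltCycle D.dir f ↔ ∃! i, (D.dir (f (i - 1)) (f i) ↔ D.dir (f i) (f (i + 1))) := by
  refine existsUnique_congr fun i => D.not_source_or_sink_iff ?_ (hf.2 i)
  simpa using hf.2 (i - 1)

end

variable {D : GraphOrientation G}

theorem ClosesThreePaths.adj_add_three (hD : D.ClosesThreePaths)
    {n : ℕ} {f : ZMod n → V} (hf : G.IsCycleMap f) (i : ZMod n)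
    (h₁ : D.dir (f i) (f (i + 1)) ↔ D.dir (f (i + 1)) (f (i + 2)))
    (h₂ : D.dir (f (i + 1)) (f (i + 2)) ↔ D.dir (f (i + 2)) (f (i + 3))) :
    G.Adj (f i) (f (i + 3)) := by
  have e₁ := hf.2 i
  have e₂ : G.Adj (f (i + 1)) (f (i + 2)) := by convert hf.2 (i + 1) using 2; ring
  have e₃ : G.Adj (f (i + 2)) (f (i + 3)) := by convert hf.2 (i + 2) using 2; ring
  by_cases h : D.dir (f i) (f (i + 1))
  · exact hD _ _ _ _ h (h₁.1 h) (h₂.1 (h₁.1 h))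
  · refine (hD _ (f (i + 2)) (f (i + 1)) _ ?_ ?_ ?_).symm
    · exact (D.dir_iff_not_dir e₃.symm).2 (mt h₂.2 (mt h₁.2 h))
    · exact (D.dir_iff_not_dir e₂.symm).2 (mt h₁.2 h)
    · exact (D.dir_iff_not_dir e₁.symm).2 h

theorem ClosesThreePaths.isAltCycle (hG : G.CliqueFree 3) (hD : D.ClosesThreePaths)
    {f : ZMod 5 → V} (hf : G.IsCycleMap f) : IsAltCycle D.dir f := by
  classical
  have no_three_aligned : ∀ i : ZMod 5,
      ¬ ((D.dir (f i) (f (i + 1)) ↔ D.dir (f (i + 1)) (f (i + 2))) ∧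
        (D.dir (f (i + 1)) (f (i + 2)) ↔ D.dir (f (i + 2)) (f (i + 3)))) := by
    rintro i ⟨h₁, h₂⟩
    have e₃ : G.Adj (f (i + 3)) (f (i + 4)) := by convert hf.2 (i + 3) using 2; ring
    have e₄ : G.Adj (f (i + 4)) (f i) := by
      simpa [show ∀ j : ZMod 5, j + 4 + 1 = j by decide] using hf.2 (i + 4)
    exact hG {f i, f (i + 3), f (i + 4)} <| SimpleGraph.is3Clique_triple_iff.2
      ⟨hD.adj_add_three hf i h₁ h₂, e₄.symm, e₃⟩
  rw [D.isAltCycle_iff hf]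
  simpa using ZMod.existsUnique_eq_prev_of_forall_not_three_eq
    (fun i => decide (D.dir (f i) (f (i + 1)))) fun i => by
      simpa [add_assoc, one_add_one_eq_two, two_add_one_eq_three] using no_three_aligned i

end GraphOrientation

theorem oddGirth_eq_five {V : Type u} {G : SimpleGraph V} (hG : G.CliqueFree 3)
    {f : ZMod 5 → V} (hf : G.IsCycleMap f) : oddGirth G = 5 := by
  classical
  have h5 : 5 ∈ {n | Odd n ∧ ∃ f : ZMod n → V, G.IsCycleMap f} := ⟨by decide, f, hf⟩
  refine le_antisymm (Nat.sInf_le h5) (le_csInf ⟨5, h5⟩ ?_)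
  rintro n ⟨hn, g, -, hg⟩
  by_contra! hlt
  obtain rfl | rfl : n = 1 ∨ n = 3 := by
    obtain ⟨k, rfl⟩ := hn
    omega
  · exact G.loopless.irrefl _ (hg 0)
  · exact hG {g 0, g 1, g 2} <| SimpleGraph.is3Clique_triple_iff.2 ⟨hg 0, (hg 2).symm, hg 1⟩

namespace Clebsch

def gens : Finset (Fin 4 → ZMod 2) :=
  {Pi.single 0 1, Pi.single 1 1, Pi.single 2 1, Pi.single 3 1, 1}

theorem adj_add_iff {x s : Fin 4 → ZMod 2} : clebsch.Adj x (x + s) ↔ s ∈ gens := by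
  change hammingDist _ _ = 1 ∨ hammingDist _ _ = 4 ↔ _
  rw [hammingDist_eq_hammingNorm, neg_add_cancel_left]
  revert s
  decide

theorem adj_iff_exists {x y : Fin 4 → ZMod 2} :
    clebsch.Adj x y ↔ ∃ s ∈ gens, y = x + s := by
  refine ⟨fun h => ⟨-x + y, ?_, (add_neg_cancel_left x y).symm⟩, ?_⟩
  · rwa [← adj_add_iff, add_neg_cancel_left]
  · rintro ⟨s, hs, rfl⟩
    exact adj_add_iff.2 hs

theorem add_notMem_gens : ∀ s ∈ gens, ∀ r ∈ gens, s + r ∉ gens := by decide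

theorem cliqueFree_three : clebsch.CliqueFree 3 := by
  intro t ht
  obtain ⟨a, b, c, hab, hac, hbc, -⟩ := SimpleGraph.is3Clique_iff.1 ht
  obtain ⟨s, hs, rfl⟩ := adj_iff_exists.1 hab
  obtain ⟨r, hr, rfl⟩ := adj_iff_exists.1 hbc
  rw [add_assoc, adj_add_iff] at hac
  exact add_notMem_gens s hs r hr hac

def pentagon : ZMod 5 → Fin 4 → ZMod 2 := ![0, ![1, 0, 0, 0], ![1, 1, 0, 0], ![1, 1, 1, 0], 1]

theorem isCycleMap_pentagon : clebsch.IsCycleMap pentagon :=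
  ⟨by decide, fun i => adj_iff_exists.2 (by revert i; decide)⟩

def color (x : Fin 4 → ZMod 2) : ℕ := 2 * (x 1 + x 2 + x 3).val + (x 0).val

theorem color_add_ne : ∀ x, ∀ s ∈ gens, color (x + s) ≠ color x := by decide

def coloring : clebsch.Coloring ℕ :=
  SimpleGraph.Coloring.mk color fun h => by
    obtain ⟨s, hs, rfl⟩ := adj_iff_exists.1 h
    exact (color_add_ne _ s hs).symm

theorem add_mem_gens_of_color_strictAnti : ∀ a, ∀ s ∈ gens, ∀ t ∈ gens, ∀ r ∈ gens,
    color (a + s) < color a → color (a + s + t) < color (a + s) →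
      color (a + s + t + r) < color (a + s + t) → s + (t + r) ∈ gens := by
  decide

theorem closesThreePaths : (GraphOrientation.ofColoring coloring).ClosesThreePaths := by
  rintro a b c d ⟨hab, hba⟩ ⟨hbc, hcb⟩ ⟨hcd, hdc⟩
  obtain ⟨s, hs, rfl⟩ := adj_iff_exists.1 hab
  obtain ⟨t, ht, rfl⟩ := adj_iff_exists.1 hbc
  obtain ⟨r, hr, rfl⟩ := adj_iff_exists.1 hcd
  rw [add_assoc, add_assoc, adj_add_iff]
  exact add_mem_gens_of_color_strictAnti a s hs t ht r hr hba hcb hdc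

end Clebsch

theorem statement17 :
    oddGirth clebsch = 5 ∧
      ∃ D : GraphOrientation clebsch,
        ∀ f : ZMod 5 → (Fin 4 → ZMod 2), clebsch.IsCycleMap f → IsAltCycle D.dir f :=
  ⟨oddGirth_eq_five Clebsch.cliqueFree_three Clebsch.isCycleMap_pentagon,
    _, fun _ => Clebsch.closesThreePaths.isAltCycle Clebsch.cliqueFree_three⟩
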